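/- Size explosion in the FBC: for every inert A and every n ≥ 1, the term tₙ A reduces in exactly n →f-steps to the inert A^{2ⁿ}, i.e., tₙ A →fⁿ A^{2ⁿ}. (Thus a term of size linear in n evaluates in n steps to a term of size exponential in n.) -/
import Mathlib


/-- Terms of the fireball calculus (FBC): variables, symbols, abstractions, applications. -/
inductive Term : Type
  | var : ℕ → Term
  | sym : ℕ → Term
  | lam : ℕ → Term → Term
  | app : Term → Term → Term

/-- Free variables of a term (symbols do not count as variables). -/
def Term.fv : Term → Finset ℕ
  | .var x => {x}
  | .sym _ => ∅
  | .lam x t => Term.fv t \ {x}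
  | .app t u => Term.fv t ∪ Term.fv u

/-- A term is closed when it has no free variables. -/
def Term.Closed (t : Term) : Prop := Term.fv t = ∅

/-- Capture-avoiding substitution `t{x:=u}` (under the convention that bound
variables are renamed apart, substitution proceeds structurally, stopping at
binders for `x`). -/
def Term.subst (x : ℕ) (u : Term) : Term → Term
  | .var y => if y = x then u else .var y
  | .sym a => .sym a
  | .lam y t => if y = x then .lam y t else .lam y (Term.subst x u t)
  | .app t s => .app (Term.subst x u t) (Term.subst x u s)

mutual
  /-- Inerts: a symbol applied to zero or more fireballs. -/
  inductive Inert : Term → Prop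
    | sym : ∀ a : ℕ, Inert (Term.sym a)
    | app : ∀ t f : Term, Inert t → Fireball f → Inert (Term.app t f)
  /-- Fireballs: values (abstractions) or inerts. -/
  inductive Fireball : Term → Prop
    | val : ∀ (x : ℕ) (t : Term), Fireball (Term.lam x t)
    | inert : ∀ t : Term, Inert t → Fireball t
end

/-- Contexts with one hole, of the shape E ::= ⟨·⟩ | t E | E t. -/
inductive Ctx : Type
  | hole : Ctx
  | appR : Term → Ctx → Ctx
  | appL : Ctx → Term → Ctx

/-- Plugging a term in a context. -/
def Ctx.plug : Ctx → Term → Term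
  | .hole, t => t
  | .appR u E, t => Term.app u (Ctx.plug E t)
  | .appL E f, t => Term.app (Ctx.plug E t) f

/-- Evaluation contexts E ::= ⟨·⟩ | t E | E f, where f must be a fireball. -/
inductive Ctx.Eval : Ctx → Prop
  | hole : Ctx.Eval Ctx.hole
  | appR : ∀ (t : Term) (E : Ctx), Ctx.Eval E → Ctx.Eval (Ctx.appR t E)
  | appL : ∀ (E : Ctx) (f : Term), Ctx.Eval E → Fireball f → Ctx.Eval (Ctx.appL E f)

/-- The fireball reduction →f : E⟨(λx.t) f⟩ →f E⟨t{x:=f}⟩ with f a fireball. -/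
inductive Step : Term → Term → Prop
  | fire : ∀ (E : Ctx) (x : ℕ) (t f : Term), Ctx.Eval E → Fireball f →
      Step (Ctx.plug E (Term.app (Term.lam x t) f)) (Ctx.plug E (Term.subst x f t))

/-- The family tₙ: `tFam n` is t_{n+1}, i.e. tFam 0 = t₁ = λx₁.(x₁ x₁) and
tFam (n+1) = t_{n+2} = λx_{n+2}.(t_{n+1} (x_{n+2} x_{n+2})). -/
def tFam : ℕ → Term
  | 0 => Term.lam 0 (Term.app (Term.var 0) (Term.var 0))
  | n+1 => Term.lam (n+1) (Term.app (tFam n) (Term.app (Term.var (n+1)) (Term.var (n+1))))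

/-- `pow2 n s` is s^{2ⁿ}: pow2 0 s = s, pow2 (n+1) s = (pow2 n s) (pow2 n s). -/
def pow2 : ℕ → Term → Term
  | 0, s => s
  | n+1, s => Term.app (pow2 n s) (pow2 n s)

/-- Exactly n →f-steps. -/
def StepN : ℕ → Term → Term → Prop
  | 0, t, u => t = u
  | n+1, t, u => ∃ w, Step t w ∧ StepN n w u


lemma tFam_subst (n x : ℕ) (u : Term) : Term.subst x u (tFam n) = tFam n := by
  induction n with
  | zero => simp [tFam, Term.subst]; intro h h2; exact (h h2).elim
  | succ n ih =>
    simp only [tFam, Term.subst]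
    split
    · rfl
    · simp_all [Term.subst]

lemma pow2_app (n : ℕ) (A : Term) : pow2 n (Term.app A A) = pow2 (n+1) A := by
  induction n with
  | zero => rfl
  | succ n ih => simp [pow2, ih]

lemma step_top (x : ℕ) (t f : Term) (hf : Fireball f) :
    Step (Term.app (Term.lam x t) f) (Term.subst x f t) :=
  Step.fire Ctx.hole x t f Ctx.Eval.hole hf

/-- size explosion in the FBC: for every inert A and n ≥ 1,
tₙ A →fⁿ A^{2ⁿ} (here with index shift: t_{n+1} A reduces in n+1 steps to A^{2^{n+1}}). -/
theorem size_explosion_FBC (A : Term) (hA : Inert A) (n : ℕ) :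
    StepN (n+1) (Term.app (tFam n) A) (pow2 (n+1) A) := by
  induction n generalizing A with
  | zero =>
    refine ⟨Term.app A A, ?_, rfl⟩
    have := step_top 0 (Term.app (Term.var 0) (Term.var 0)) A (Fireball.inert A hA)
    simpa [tFam, Term.subst, pow2] using this
  | succ n ih =>
    refine ⟨Term.app (tFam n) (Term.app A A), ?_, ?_⟩
    · have := step_top (n+1) (Term.app (tFam n) (Term.app (Term.var (n+1)) (Term.var (n+1)))) A
        (Fireball.inert A hA)
      simpa [tFam, Term.subst, tFam_subst] using this
    · have hAA : Inert (Term.app A A) := Inert.app A A hA (Fireball.inert A hA)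
      have := ih (Term.app A A) hAA
      rwa [pow2_app] at this
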